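/- Let p = 2 and let (f_m)_{m∈ℕ} be a Riesz sequence in L²(I), i.e., there exist constants 0 < c ≤ C such that for every finitely supported scalar sequence (a_m), c·∑_m |a_m|² ≤ ‖∑_m a_m f_m‖₂² ≤ C·∑_m |a_m|². Then (f_m *_T 0)_{m∈ℕ} is also a Riesz sequence in L²(I): there exist constants 0 < c' ≤ C' such that for every finitely supported scalar sequence (a_m), c'·∑_m |a_m|² ≤ ‖∑_m a_m (f_m *_T 0)‖₂² ≤ C'·∑_m |a_m|². -/

import Mathlib

/-!
Write `T = T_{f,0}`. Each `L_n` has slope `a_n`, and `∑ a_n = 1`, so the change of variables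
`y = L_n⁻¹ t` on the pieces `I_n` gives `‖T g - T g'‖₂ ≤ Λ ‖g - g'‖₂`. Hence the fixed point
`f *_T 0` is unique, which makes `f ↦ f *_T 0` linear; and since `f = T 0`, also
`‖f *_T 0 - f‖₂ ≤ Λ ‖f *_T 0‖₂`, i.e. `(1 - Λ) ‖f *_T 0‖₂ ≤ ‖f‖₂ ≤ (1 + Λ) ‖f *_T 0‖₂`.
A linear map with such two-sided bounds sends a Riesz sequence with bounds `c, C` to one with
bounds `c / (1 + Λ)², C / (1 - Λ)²`.
-/

open MeasureTheory ENNReal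

noncomputable section

/-- The inverse of the increasing affine map `L n` sending `[x 0, x N]` onto
`[x n, x (n+1)]` (so `L n (x 0) = x n.castSucc` and `L n (x N) = x n.succ`). -/
def Linv {N : ℕ} (x : Fin (N + 1) → ℝ) (n : Fin N) (y : ℝ) : ℝ :=
  x 0 + (y - x n.castSucc) * (x (Fin.last N) - x 0) / (x n.succ - x n.castSucc)

/-- The subinterval `I n` of the partition: `[x 0, x 1]` for `n = 0` and
`(x n, x (n+1)]` otherwise. -/
def subInt {N : ℕ} (x : Fin (N + 1) → ℝ) (n : Fin N) : Set ℝ :=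
  if n.val = 0 then Set.Icc (x n.castSucc) (x n.succ)
  else Set.Ioc (x n.castSucc) (x n.succ)

/-- `h` is the image of `g` under the Read–Bajraktarević operator `T_{f,b}` with
scale functions `α`, almost everywhere: on each `I n`,
`h = f + (α n ∘ Lₙ⁻¹) · ((g - b) ∘ Lₙ⁻¹)`. -/
def RBEq {N : ℕ} (μ : Measure ℝ) (x : Fin (N + 1) → ℝ) (α : Fin N → ℝ → ℝ)
    (f b g h : ℝ → ℝ) : Prop :=
  ∀ n : Fin N, ∀ᵐ t ∂μ, t ∈ subInt x n →
    h t = f t + α n (Linv x n t) * (g (Linv x n t) - b (Linv x n t))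

/-- `h` satisfies the self-referential equation of `T_{f,b}`, i.e. `h` is a fixed
point of `T_{f,b}`; `h` is then the fractal convolution `f *_T b`. -/
def SelfRef {N : ℕ} (μ : Measure ℝ) (x : Fin (N + 1) → ℝ) (α : Fin N → ℝ → ℝ)
    (f b h : ℝ → ℝ) : Prop :=
  RBEq μ x α f b h h

lemma eLpNorm_two_pow {β E : Type*} [MeasurableSpace β] [NormedAddCommGroup E]
    (μ : Measure β) (w : β → E) :
    eLpNorm w 2 μ ^ 2 = ∫⁻ y, ‖w y‖ₑ ^ 2 ∂μ := by
  simpa using eLpNorm_nnreal_pow_eq_lintegral (f := w) (μ := μ) (p := 2) two_ne_zero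

lemma Lp.ae_norm_le_norm_top {β E : Type*} [MeasurableSpace β] [NormedAddCommGroup E]
    {μ : Measure β} (a : Lp E ∞ μ) : ∀ᵐ y ∂μ, ‖a y‖ ≤ ‖a‖ := by
  have hfin : eLpNormEssSup (⇑a) μ ≠ ∞ := by
    rw [← eLpNorm_exponent_top]; exact Lp.eLpNorm_ne_top a
  filter_upwards [ae_le_eLpNormEssSup (f := ⇑a) (μ := μ)] with y hy
  rw [Lp.norm_def, eLpNorm_exponent_top, ← toReal_enorm]
  exact ENNReal.toReal_mono hfin hy

lemma norm_bounds_of_norm_sub_le {E : Type*} [SeminormedAddCommGroup E] {u v : E} {Λ : ℝ}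
    (h : ‖u - v‖ ≤ Λ * ‖u‖) :
    (1 - Λ) * ‖u‖ ≤ ‖v‖ ∧ ‖v‖ ≤ (1 + Λ) * ‖u‖ := by
  have h₁ := norm_sub_norm_le u v
  have h₂ := norm_sub_le_norm_sub_add_norm_sub v u 0
  rw [sub_zero, sub_zero, norm_sub_rev] at h₂
  constructor <;> linarith

section Riesz

variable {ι E F : Type*} [SeminormedAddCommGroup E] [NormedSpace ℝ E]
  [SeminormedAddCommGroup F] [NormedSpace ℝ F]

def HasRieszBounds (f : ι → E) (c C : ℝ) : Prop :=
  ∀ (s : Finset ι) (a : ι → ℝ),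
    c * ∑ m ∈ s, (a m)^2 ≤ ‖∑ m ∈ s, a m • f m‖^2 ∧
    ‖∑ m ∈ s, a m • f m‖^2 ≤ C * ∑ m ∈ s, (a m)^2

theorem HasRieszBounds.map {f : ι → E} {c C : ℝ} (hf : HasRieszBounds f c C) (T : E →ₗ[ℝ] F)
    {a b : ℝ} (ha : 0 < a) (hb : 0 < b) (hT : ∀ v, a * ‖T v‖ ≤ ‖v‖ ∧ ‖v‖ ≤ b * ‖T v‖) :
    HasRieszBounds (T ∘ f) (c / b ^ 2) (C / a ^ 2) := by
  intro s w
  obtain ⟨hlow, hup⟩ := hf s w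
  have hTsum : ∑ m ∈ s, w m • (T ∘ f) m = T (∑ m ∈ s, w m • f m) := by simp [map_sum]
  obtain ⟨hTa, hTb⟩ := hT (∑ m ∈ s, w m • f m)
  rw [hTsum, div_mul_eq_mul_div, div_mul_eq_mul_div, div_le_iff₀ (by positivity),
    le_div_iff₀ (by positivity)]
  constructor
  · calc c * ∑ m ∈ s, w m ^ 2 ≤ ‖∑ m ∈ s, w m • f m‖ ^ 2 := hlow
      _ ≤ (b * ‖T (∑ m ∈ s, w m • f m)‖) ^ 2 := by gcongr
      _ = _ := by ring
  · calc ‖T (∑ m ∈ s, w m • f m)‖ ^ 2 * a ^ 2 = (a * ‖T (∑ m ∈ s, w m • f m)‖) ^ 2 := by ring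
      _ ≤ ‖∑ m ∈ s, w m • f m‖ ^ 2 := by gcongr
      _ ≤ C * ∑ m ∈ s, w m ^ 2 := hup

end Riesz

section FractalConvolution

variable {N : ℕ} {x : Fin (N + 1) → ℝ} {μ : Measure ℝ} {α : Fin N → ℝ → ℝ}

lemma subInt_subset_Icc (n : Fin N) : subInt x n ⊆ Set.Icc (x n.castSucc) (x n.succ) := by
  unfold subInt; split
  · exact subset_rfl
  · exact Set.Ioc_subset_Icc_self

lemma Ioc_subset_subInt (n : Fin N) : Set.Ioc (x n.castSucc) (x n.succ) ⊆ subInt x n := by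
  unfold subInt; split
  · exact Set.Ioc_subset_Icc_self
  · exact subset_rfl

lemma measurableSet_subInt (n : Fin N) : MeasurableSet (subInt x n) := by
  unfold subInt; split
  · exact measurableSet_Icc
  · exact measurableSet_Ioc

lemma subInt_subset_Icc_zero_last (hx : Monotone x) (n : Fin N) :
    subInt x n ⊆ Set.Icc (x 0) (x (Fin.last N)) :=
  (subInt_subset_Icc n).trans (Set.Icc_subset_Icc (hx (Fin.zero_le _)) (hx (Fin.le_last _)))

lemma Icc_zero_last_subset_iUnion_subInt (hx : Monotone x) (hN : 0 < N) :
    Set.Icc (x 0) (x (Fin.last N)) ⊆ ⋃ n, subInt x n := by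
  intro t ⟨ht₀, ht⟩
  by_contra hcov
  simp only [Set.mem_iUnion, not_exists] at hcov
  have hfirst : x 0 < t := by
    refine ht₀.lt_of_ne fun h => hcov ⟨0, hN⟩ ?_
    simp only [subInt]
    exact ⟨h ▸ le_rfl, h ▸ hx (Fin.zero_le _)⟩
  -- the point escapes every subinterval, so it lies to the right of every node
  have hright : ∀ k, x k < t := Fin.induction hfirst fun i hi =>
    lt_of_not_ge fun h => hcov i (Ioc_subset_subInt i ⟨hi, h⟩)
  exact (hright (Fin.last N)).not_ge ht

lemma apply_zero_lt_apply_last (hx : StrictMono x) (hN : 0 < N) : x 0 < x (Fin.last N) :=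
  hx (by rw [Fin.lt_def]; simpa using hN)

/-- The slope `a_n` of the affine map `L_n`. -/
def Lslope (x : Fin (N + 1) → ℝ) (n : Fin N) : ℝ :=
  (x n.succ - x n.castSucc) / (x (Fin.last N) - x 0)

lemma Lslope_pos (hx : StrictMono x) (hN : 0 < N) (n : Fin N) : 0 < Lslope x n :=
  div_pos (sub_pos.2 (hx n.castSucc_lt_succ))
    (sub_pos.2 (apply_zero_lt_apply_last hx hN))

lemma sum_Lslope (hx : StrictMono x) (hN : 0 < N) : ∑ n, Lslope x n = 1 := by
  obtain ⟨M, rfl⟩ : ∃ M, N = M + 1 := ⟨N - 1, by omega⟩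
  have htel := Fin.sum_Iic_sub (Fin.last M) x
  rw [← Fin.top_eq_last, Finset.Iic_top, Fin.top_eq_last, Fin.succ_last] at htel
  unfold Lslope
  rw [← Finset.sum_div, htel]
  exact div_self (sub_pos.2 (apply_zero_lt_apply_last hx hN)).ne'

lemma Linv_apply (n : Fin N) (y : ℝ) :
    Linv x n y = (Lslope x n)⁻¹ * (y - x n.castSucc) + x 0 := by
  simp only [Linv, Lslope, inv_div]; ring

lemma Linv_mem_Icc (hx : StrictMono x) (hN : 0 < N) (n : Fin N) {t : ℝ}
    (ht : t ∈ subInt x n) : Linv x n t ∈ Set.Icc (x 0) (x (Fin.last N)) := by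
  obtain ⟨ht₁, ht₂⟩ := subInt_subset_Icc n ht
  have ha := Lslope_pos hx hN n
  have hD := sub_pos.2 (apply_zero_lt_apply_last hx hN)
  have hd : Lslope x n * (x (Fin.last N) - x 0) = x n.succ - x n.castSucc := by
    unfold Lslope; field_simp
  rw [Linv_apply]
  constructor
  · have : 0 ≤ (Lslope x n)⁻¹ * (t - x n.castSucc) := by positivity
    linarith
  · rw [← le_sub_iff_add_le, inv_mul_le_iff₀ ha]
    linarith

lemma measurableEmbedding_Linv (hx : StrictMono x) (hN : 0 < N) (n : Fin N) :
    MeasurableEmbedding (Linv x n) := by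
  have ha := (inv_pos.2 (Lslope_pos hx hN n)).ne'
  have : Linv x n = (Homeomorph.addRight (x 0)) ∘
      (Homeomorph.mulLeft₀ _ ha) ∘ (Homeomorph.subRight (x n.castSucc)) :=
    funext (Linv_apply n)
  rw [this]
  exact (Homeomorph.addRight _).measurableEmbedding.comp
    ((Homeomorph.mulLeft₀ _ ha).measurableEmbedding.comp
      (Homeomorph.subRight _).measurableEmbedding)

lemma map_Linv_volume (hx : StrictMono x) (hN : 0 < N) (n : Fin N) :
    volume.map (Linv x n) = ENNReal.ofReal (Lslope x n) • volume := by
  have ha := Lslope_pos hx hN n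
  have : Linv x n = (· + x 0) ∘ ((Lslope x n)⁻¹ * ·) ∘ (· - x n.castSucc) :=
    funext (Linv_apply n)
  rw [this, ← Measure.map_map (by fun_prop) (by fun_prop), ← Measure.map_map (by fun_prop)
    (by fun_prop), map_sub_right_eq_self, Real.map_volume_mul_left (inv_ne_zero ha.ne'),
    Measure.map_smul, map_add_right_eq_self, inv_inv, abs_of_pos ha]

lemma ae_imp_comp_Linv (hx : StrictMono x) (hN : 0 < N) (n : Fin N) {P : ℝ → Prop}
    (hP : ∀ᵐ y ∂volume.restrict (Set.Icc (x 0) (x (Fin.last N))), P y) :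
    ∀ᵐ t ∂volume.restrict (Set.Icc (x 0) (x (Fin.last N))), t ∈ subInt x n → P (Linv x n t) := by
  have hqmp : Measure.QuasiMeasurePreserving (Linv x n) volume volume :=
    ⟨(measurableEmbedding_Linv hx hN n).measurable, by
      rw [map_Linv_volume hx hN n]; exact Measure.smul_absolutelyContinuous⟩
  have hP' := hqmp.ae ((ae_restrict_iff' measurableSet_Icc).1 hP)
  exact ae_restrict_of_ae (hP'.mono fun t h ht => h (Linv_mem_Icc hx hN n ht))

lemma ae_restrict_subInt_of_imp (hx : Monotone x) (n : Fin N) {P : ℝ → Prop}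
    (hP : ∀ᵐ t ∂volume.restrict (Set.Icc (x 0) (x (Fin.last N))), t ∈ subInt x n → P t) :
    ∀ᵐ t ∂volume.restrict (subInt x n), P t := by
  filter_upwards [ae_restrict_of_ae_restrict_of_subset (subInt_subset_Icc_zero_last hx n) hP,
    ae_restrict_mem (measurableSet_subInt n)] with t h ht
  exact h ht

lemma setLIntegral_subInt_comp_Linv_le (hx : StrictMono x) (hN : 0 < N) (n : Fin N)
    (F : ℝ → ℝ≥0∞) :
    ∫⁻ t in subInt x n, F (Linv x n t) ≤
      ENNReal.ofReal (Lslope x n) * ∫⁻ y in Set.Icc (x 0) (x (Fin.last N)), F y := by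
  have hL := measurableEmbedding_Linv hx hN n
  calc ∫⁻ t in subInt x n, F (Linv x n t)
      ≤ ∫⁻ t in Linv x n ⁻¹' Set.Icc (x 0) (x (Fin.last N)), F (Linv x n t) :=
        lintegral_mono_set fun t ht => Linv_mem_Icc hx hN n ht
    _ = ∫⁻ y in Set.Icc (x 0) (x (Fin.last N)), F y ∂volume.map (Linv x n) := by
        rw [hL.restrict_map, hL.lintegral_map]
    _ = _ := by
        rw [map_Linv_volume hx hN n, Measure.restrict_smul, lintegral_smul_measure, smul_eq_mul]

lemma setLIntegral_Icc_le_sum_subInt (hx : Monotone x) (hN : 0 < N) (F : ℝ → ℝ≥0∞) :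
    ∫⁻ y in Set.Icc (x 0) (x (Fin.last N)), F y ≤ ∑ n, ∫⁻ t in subInt x n, F t :=
  (lintegral_mono_set (Icc_zero_last_subset_iUnion_subInt hx hN)).trans
    ((lintegral_iUnion_le _ _).trans_eq (tsum_fintype _))

theorem eLpNorm_le_of_ae_eq_mul_comp_Linv (hx : StrictMono x) (hN : 0 < N) {Λ : ℝ}
    (hα : ∀ n, ∀ᵐ y ∂volume.restrict (Set.Icc (x 0) (x (Fin.last N))), ‖α n y‖ ≤ Λ)
    {u v : ℝ → ℝ}
    (huv : ∀ n, ∀ᵐ t ∂volume.restrict (Set.Icc (x 0) (x (Fin.last N))), t ∈ subInt x n →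
      u t = α n (Linv x n t) * v (Linv x n t)) :
    eLpNorm u 2 (volume.restrict (Set.Icc (x 0) (x (Fin.last N)))) ≤
      ENNReal.ofReal Λ * eLpNorm v 2 (volume.restrict (Set.Icc (x 0) (x (Fin.last N)))) := by
  set J := ∫⁻ y in Set.Icc (x 0) (x (Fin.last N)), ‖v y‖ₑ ^ 2
  have hpiece : ∀ n, ∫⁻ t in subInt x n, ‖u t‖ₑ ^ 2 ≤
      ENNReal.ofReal Λ ^ 2 * (ENNReal.ofReal (Lslope x n) * J) := fun n => calc
    ∫⁻ t in subInt x n, ‖u t‖ₑ ^ 2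
        ≤ ∫⁻ t in subInt x n, ENNReal.ofReal Λ ^ 2 * ‖v (Linv x n t)‖ₑ ^ 2 := by
          refine lintegral_mono_ae ?_
          filter_upwards [ae_restrict_subInt_of_imp hx.monotone n (huv n),
            ae_restrict_subInt_of_imp hx.monotone n (ae_imp_comp_Linv hx hN n (hα n))]
            with t hu hαt
          rw [hu, enorm_mul, mul_pow, ← ofReal_norm]
          gcongr
      _ = ENNReal.ofReal Λ ^ 2 * ∫⁻ t in subInt x n, ‖v (Linv x n t)‖ₑ ^ 2 :=
          lintegral_const_mul' _ _ (by finiteness)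
      _ ≤ _ := by gcongr; exact setLIntegral_subInt_comp_Linv_le hx hN n _
  have hsq : ∫⁻ t in Set.Icc (x 0) (x (Fin.last N)), ‖u t‖ₑ ^ 2 ≤ ENNReal.ofReal Λ ^ 2 * J :=
    calc ∫⁻ t in Set.Icc (x 0) (x (Fin.last N)), ‖u t‖ₑ ^ 2
        ≤ ∑ n, ∫⁻ t in subInt x n, ‖u t‖ₑ ^ 2 := setLIntegral_Icc_le_sum_subInt hx.monotone hN _
      _ ≤ ∑ n, ENNReal.ofReal Λ ^ 2 * (ENNReal.ofReal (Lslope x n) * J) :=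
          Finset.sum_le_sum fun n _ => hpiece n
      _ = ENNReal.ofReal Λ ^ 2 * J := by
          rw [← Finset.mul_sum, ← Finset.sum_mul, ← ENNReal.ofReal_sum_of_nonneg
            fun n _ => (Lslope_pos hx hN n).le, sum_Lslope hx hN, ENNReal.ofReal_one, one_mul]
  rw [← ENNReal.pow_le_pow_left_iff two_ne_zero, mul_pow, eLpNorm_two_pow, eLpNorm_two_pow]
  exact hsq

theorem RBEq.norm_sub_le (hx : StrictMono x) (hN : 0 < N)
    (hμ : μ = volume.restrict (Set.Icc (x 0) (x (Fin.last N)))) {Λ : ℝ} (hΛ : 0 ≤ Λ)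
    (hα : ∀ n, ∀ᵐ y ∂μ, ‖α n y‖ ≤ Λ) {f b : ℝ → ℝ} {g g' h h' : Lp ℝ 2 μ}
    (H : RBEq μ x α f b g h) (H' : RBEq μ x α f b g' h') : ‖h - h'‖ ≤ Λ * ‖g - g'‖ := by
  subst hμ
  have hdiff : ∀ n, ∀ᵐ t ∂volume.restrict (Set.Icc (x 0) (x (Fin.last N))), t ∈ subInt x n →
      (h - h') t = α n (Linv x n t) * (g - g') (Linv x n t) := fun n => by
    filter_upwards [H n, H' n, Lp.coeFn_sub h h', ae_imp_comp_Linv hx hN n (Lp.coeFn_sub g g')]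
      with t e e' eh eg ht
    rw [eh, eg ht, Pi.sub_apply, Pi.sub_apply, e ht, e' ht]
    ring
  rw [Lp.norm_def, Lp.norm_def, ← ENNReal.toReal_ofReal hΛ, ← ENNReal.toReal_mul]
  exact ENNReal.toReal_mono (by finiteness) (eLpNorm_le_of_ae_eq_mul_comp_Linv hx hN hα hdiff)

theorem SelfRef.eq (hx : StrictMono x) (hN : 0 < N)
    (hμ : μ = volume.restrict (Set.Icc (x 0) (x (Fin.last N)))) {Λ : ℝ} (hΛ : 0 ≤ Λ)
    (hΛ₁ : Λ < 1) (hα : ∀ n, ∀ᵐ y ∂μ, ‖α n y‖ ≤ Λ) {f b : ℝ → ℝ} {h h' : Lp ℝ 2 μ}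
    (H : SelfRef μ x α f b h) (H' : SelfRef μ x α f b h') : h = h' := by
  have hle := RBEq.norm_sub_le hx hN hμ hΛ hα H H'
  exact sub_eq_zero.1 (norm_eq_zero.1 (by nlinarith [norm_nonneg (h - h')]))

lemma rbEq_base (f b : ℝ → ℝ) : RBEq μ x α f b b f :=
  fun _ => ae_of_all _ fun t _ => by rw [sub_self, mul_zero, add_zero]

lemma RBEq.add {f₁ b₁ g₁ h₁ f₂ b₂ g₂ h₂ : ℝ → ℝ} (H₁ : RBEq μ x α f₁ b₁ g₁ h₁)
    (H₂ : RBEq μ x α f₂ b₂ g₂ h₂) : RBEq μ x α (f₁ + f₂) (b₁ + b₂) (g₁ + g₂) (h₁ + h₂) :=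
  fun n => by
    filter_upwards [H₁ n, H₂ n] with t e₁ e₂ ht
    simp only [Pi.add_apply, e₁ ht, e₂ ht]
    ring

lemma RBEq.const_smul {f b g h : ℝ → ℝ} (H : RBEq μ x α f b g h) (c : ℝ) :
    RBEq μ x α (c • f) (c • b) (c • g) (c • h) :=
  fun n => by
    filter_upwards [H n] with t e ht
    simp only [Pi.smul_apply, smul_eq_mul, e ht]
    ring

lemma RBEq.congr_ae (hx : StrictMono x) (hN : 0 < N)
    (hμ : μ = volume.restrict (Set.Icc (x 0) (x (Fin.last N)))) {f b g h f' b' g' h' : ℝ → ℝ}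
    (H : RBEq μ x α f b g h) (hf : f =ᵐ[μ] f') (hb : b =ᵐ[μ] b') (hg : g =ᵐ[μ] g')
    (hh : h =ᵐ[μ] h') : RBEq μ x α f' b' g' h' := fun n => by
  subst hμ
  filter_upwards [H n, hf, hh, ae_imp_comp_Linv hx hN n hb, ae_imp_comp_Linv hx hN n hg]
    with t e ef eh eb eg ht
  rw [← ef, ← eh, ← eb ht, ← eg ht]
  exact e ht

theorem isLinearMap_of_selfRef (hx : StrictMono x) (hN : 0 < N)
    (hμ : μ = volume.restrict (Set.Icc (x 0) (x (Fin.last N)))) {Λ : ℝ} (hΛ : 0 ≤ Λ)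
    (hΛ₁ : Λ < 1) (hα : ∀ n, ∀ᵐ y ∂μ, ‖α n y‖ ≤ Λ) {P : Lp ℝ 2 μ → Lp ℝ 2 μ}
    (hP : ∀ F : Lp ℝ 2 μ, SelfRef μ x α F ⇑(0 : Lp ℝ 2 μ) (P F)) : IsLinearMap ℝ P := by
  have h0 : ⇑(0 : Lp ℝ 2 μ) =ᵐ[μ] 0 := Lp.coeFn_zero _ _ _
  constructor
  · intro F G
    refine SelfRef.eq hx hN hμ hΛ hΛ₁ hα (hP (F + G)) (((hP F).add (hP G)).congr_ae hx hN hμ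
      (Lp.coeFn_add F G).symm ?_ (Lp.coeFn_add _ _).symm (Lp.coeFn_add _ _).symm)
    exact (h0.add h0).trans (by rw [add_zero]; exact h0.symm)
  · intro c F
    refine SelfRef.eq hx hN hμ hΛ hΛ₁ hα (hP (c • F)) (((hP F).const_smul c).congr_ae hx hN hμ
      (Lp.coeFn_smul c F).symm ?_ (Lp.coeFn_smul _ _).symm (Lp.coeFn_smul _ _).symm)
    exact (h0.const_smul c).trans (by rw [smul_zero]; exact h0.symm)

end FractalConvolution

/-- If `(f m)` is a Riesz sequence in `L²(I)`, then so is
`(f m *_T 0)`. -/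
theorem partial_convolution_null_base_riesz
    (N : ℕ) (hN : 2 ≤ N) (x : Fin (N + 1) → ℝ) (hx : StrictMono x)
    (μ : Measure ℝ) (hμ : μ = volume.restrict (Set.Icc (x 0) (x (Fin.last N))))
    (α : Fin N → Lp ℝ ∞ μ)
    (Λ : ℝ) (hΛdef : Λ = ⨆ n : Fin N, ‖α n‖) (hΛ : Λ < 1)
    (P₂ : Lp ℝ 2 μ → Lp ℝ 2 μ)
    (hP₂ : ∀ f : Lp ℝ 2 μ, SelfRef μ x (fun n => ⇑(α n)) ⇑f ⇑(0 : Lp ℝ 2 μ) ⇑(P₂ f))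
    (f : ℕ → Lp ℝ 2 μ)
    (c C : ℝ) (hc : 0 < c) (hcC : c ≤ C)
    (hRiesz : ∀ (s : Finset ℕ) (a : ℕ → ℝ),
      c * ∑ m ∈ s, (a m)^2 ≤ ‖∑ m ∈ s, a m • f m‖^2 ∧
      ‖∑ m ∈ s, a m • f m‖^2 ≤ C * ∑ m ∈ s, (a m)^2) :
    ∃ c' C' : ℝ, 0 < c' ∧ c' ≤ C' ∧
      ∀ (s : Finset ℕ) (a : ℕ → ℝ),
        c' * ∑ m ∈ s, (a m)^2 ≤ ‖∑ m ∈ s, a m • P₂ (f m)‖^2 ∧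
        ‖∑ m ∈ s, a m • P₂ (f m)‖^2 ≤ C' * ∑ m ∈ s, (a m)^2 := by
  have hN₀ : 0 < N := by omega
  have hαΛ : ∀ n, ‖α n‖ ≤ Λ := fun n =>
    hΛdef ▸ le_ciSup (f := fun n => ‖α n‖) (Set.finite_range _).bddAbove n
  have hΛ₀ : 0 ≤ Λ := (norm_nonneg _).trans (hαΛ ⟨0, hN₀⟩)
  have hα : ∀ n, ∀ᵐ y ∂μ, ‖α n y‖ ≤ Λ := fun n =>
    (Lp.ae_norm_le_norm_top (α n)).mono fun y hy => hy.trans (hαΛ n)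
  have hP : IsLinearMap ℝ P₂ := isLinearMap_of_selfRef hx hN₀ hμ hΛ₀ hΛ hα hP₂
  -- `f` is `T_{f,0}` applied to `0`, while `P₂ f` is its fixed point
  have hPnear : ∀ F, ‖P₂ F - F‖ ≤ Λ * ‖P₂ F‖ := fun F => by
    simpa using (hP₂ F).norm_sub_le hx hN₀ hμ hΛ₀ hα (rbEq_base ⇑F ⇑(0 : Lp ℝ 2 μ))
  refine ⟨c / (1 + Λ) ^ 2, C / (1 - Λ) ^ 2, by positivity, ?_,
    HasRieszBounds.map hRiesz (hP.mk' P₂) (by linarith) (by linarith)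
      fun F => norm_bounds_of_norm_sub_le (hPnear F)⟩
  gcongr
  · linarith
  · linarith

end
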